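/- Let u ∈ ℝ, α ≠ 0, A = λI + μθ with θ the rotation generator, and consider on S¹ × ℝ² the two vector fields X(t,v) = (0, Av + Λ_t ξ) (with Λ_t = (I - R_t)θ, det A ≠ 0) and Y(t,v) = (α, R_t η₁). Then the diffeomorphism ψ(t,v) = (t, R_{-t}(v + Λ_t A⁻¹ξ)) satisfies dψ∘X = (0, Av)∘ψ and dψ∘Y = (α, -αθv + η)∘ψ, where η = αA⁻¹ξ + η₁ ∈ ℝ². -/

import Mathlib

noncomputable section
open Real Matrix ContinuousLinearMap

def th : Matrix (Fin 2) (Fin 2) ℝ := !![0, -1; 1, 0]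

def Rot (t : ℝ) : Matrix (Fin 2) (Fin 2) ℝ :=
  !![Real.cos t, -Real.sin t; Real.sin t, Real.cos t]

def Lam (t : ℝ) : Matrix (Fin 2) (Fin 2) ℝ :=
  ((1 : Matrix (Fin 2) (Fin 2) ℝ) - Rot t) * th

lemma aux (c1 c2 c3 : ℝ → ℝ) (d1 d2 d3 : ℝ) (p : ℝ × (Fin 2 → ℝ))
    (h1 : HasDerivAt c1 d1 p.1) (h2 : HasDerivAt c2 d2 p.1) (h3 : HasDerivAt c3 d3 p.1) :
    HasFDerivAt (fun q : ℝ × (Fin 2 → ℝ) => c1 q.1 * q.2 0 + c2 q.1 * q.2 1 + c3 q.1)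
      (((d1 * p.2 0 + d2 * p.2 1 + d3) • ContinuousLinearMap.fst ℝ ℝ (Fin 2 → ℝ)) +
        (c1 p.1 • ((proj 0 : (Fin 2 → ℝ) →L[ℝ] ℝ).comp (ContinuousLinearMap.snd ℝ ℝ (Fin 2 → ℝ)))) +
        (c2 p.1 • ((proj 1 : (Fin 2 → ℝ) →L[ℝ] ℝ).comp (ContinuousLinearMap.snd ℝ ℝ (Fin 2 → ℝ))))) p := by
  have e1 : HasFDerivAt (fun q : ℝ × (Fin 2 → ℝ) => c1 q.1) (d1 • ContinuousLinearMap.fst ℝ ℝ (Fin 2 → ℝ)) p :=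
    h1.comp_hasFDerivAt p hasFDerivAt_fst
  have e2 : HasFDerivAt (fun q : ℝ × (Fin 2 → ℝ) => c2 q.1) (d2 • ContinuousLinearMap.fst ℝ ℝ (Fin 2 → ℝ)) p :=
    h2.comp_hasFDerivAt p hasFDerivAt_fst
  have e3 : HasFDerivAt (fun q : ℝ × (Fin 2 → ℝ) => c3 q.1) (d3 • ContinuousLinearMap.fst ℝ ℝ (Fin 2 → ℝ)) p :=
    h3.comp_hasFDerivAt p hasFDerivAt_fst
  have v0 : HasFDerivAt (fun q : ℝ × (Fin 2 → ℝ) => q.2 0)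
      ((proj 0 : (Fin 2 → ℝ) →L[ℝ] ℝ).comp (ContinuousLinearMap.snd ℝ ℝ (Fin 2 → ℝ))) p :=
    ((proj 0 : (Fin 2 → ℝ) →L[ℝ] ℝ).comp (ContinuousLinearMap.snd ℝ ℝ (Fin 2 → ℝ))).hasFDerivAt
  have v1 : HasFDerivAt (fun q : ℝ × (Fin 2 → ℝ) => q.2 1)
      ((proj 1 : (Fin 2 → ℝ) →L[ℝ] ℝ).comp (ContinuousLinearMap.snd ℝ ℝ (Fin 2 → ℝ))) p :=
    ((proj 1 : (Fin 2 → ℝ) →L[ℝ] ℝ).comp (ContinuousLinearMap.snd ℝ ℝ (Fin 2 → ℝ))).hasFDerivAt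
  have := ((e1.mul v0).add (e2.mul v1)).add e3
  convert this using 1
  · rfl
  · rfl
  · rfl
  · rfl
  · rfl
  · ext q
    simp
  · ext q
    · simp; ring
    · simp

theorem stmt19 (lam mu alpha : ℝ) (halpha : alpha ≠ 0)
    (A : Matrix (Fin 2) (Fin 2) ℝ)
    (hA : A = lam • (1 : Matrix (Fin 2) (Fin 2) ℝ) + mu • th)
    (hdet : A.det ≠ 0)
    (xi eta1 : Fin 2 → ℝ)
    (psi : ℝ × (Fin 2 → ℝ) → ℝ × (Fin 2 → ℝ))
    (hpsi : ∀ p : ℝ × (Fin 2 → ℝ),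
      psi p = (p.1, (Rot (-p.1)).mulVec (p.2 + (Lam p.1).mulVec (A⁻¹.mulVec xi))))
    (X Y X₀ Z : ℝ × (Fin 2 → ℝ) → ℝ × (Fin 2 → ℝ))
    (hX : ∀ p, X p = (0, A.mulVec p.2 + (Lam p.1).mulVec xi))
    (hY : ∀ p, Y p = (alpha, (Rot p.1).mulVec eta1))
    (hX₀ : ∀ p, X₀ p = (0, A.mulVec p.2))
    (hZ : ∀ p, Z p = (alpha, (-alpha) • th.mulVec p.2 +
      (alpha • A⁻¹.mulVec xi + eta1))) :
    ∀ p : ℝ × (Fin 2 → ℝ),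
      fderiv ℝ psi p (X p) = X₀ (psi p) ∧ fderiv ℝ psi p (Y p) = Z (psi p) := by
  rintro ⟨t, v⟩
  set w : Fin 2 → ℝ := A⁻¹.mulVec xi with hw
  have hLam : ∀ u : ℝ, Lam u = !![Real.sin u, Real.cos u - 1; 1 - Real.cos u, Real.sin u] := by
    intro u
    ext i j
    fin_cases i <;> fin_cases j <;>
      simp [Lam, Rot, th, Matrix.mul_apply, Fin.sum_univ_two, Matrix.sub_apply, Matrix.one_apply]
  have hRotneg : ∀ u : ℝ, Rot (-u) = !![Real.cos u, Real.sin u; -Real.sin u, Real.cos u] := by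
    intro u; rw [Rot]; simp
  have hA' : A = !![lam, -mu; mu, lam] := by
    rw [hA]
    ext i j
    fin_cases i <;> fin_cases j <;> simp [th, Matrix.one_apply]
  have hAw : A.mulVec w = xi := by
    rw [hw, Matrix.mulVec_mulVec, Matrix.mul_nonsing_inv A (isUnit_iff_ne_zero.mpr hdet),
      Matrix.one_mulVec]
  have hx0 : xi 0 = lam * w 0 - mu * w 1 := by
    rw [← hAw, hA']; simp [Matrix.mulVec, dotProduct, Fin.sum_univ_two]; ring
  have hx1 : xi 1 = mu * w 0 + lam * w 1 := by
    rw [← hAw, hA']; simp [Matrix.mulVec, dotProduct, Fin.sum_univ_two]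
  -- explicit form of psi
  have hpsiF : psi = fun q : ℝ × (Fin 2 → ℝ) => (q.1,
      fun i => (![Real.cos q.1 * q.2 0 + Real.sin q.1 * q.2 1 +
          (Real.sin q.1 * w 0 + (1 - Real.cos q.1) * w 1),
        (-Real.sin q.1) * q.2 0 + Real.cos q.1 * q.2 1 +
          ((Real.cos q.1 - 1) * w 0 + Real.sin q.1 * w 1)] : Fin 2 → ℝ) i) := by
    funext q
    rw [hpsi]
    refine Prod.ext rfl ?_
    funext i
    have hP := Real.sin_sq_add_cos_sq q.1
    fin_cases i
    · simp [hRotneg, hLam, Matrix.mulVec, dotProduct, Fin.sum_univ_two, ← hw]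
      linear_combination (w 1) * hP
    · simp [hRotneg, hLam, Matrix.mulVec, dotProduct, Fin.sum_univ_two, ← hw]
      linear_combination (-(w 0)) * hP
  -- the derivative
  set D : Fin 2 → ((ℝ × (Fin 2 → ℝ)) →L[ℝ] ℝ) :=
    ![(((-Real.sin t) * v 0 + Real.cos t * v 1 + (Real.cos t * w 0 + Real.sin t * w 1)) •
          ContinuousLinearMap.fst ℝ ℝ (Fin 2 → ℝ)) +
        (Real.cos t • ((proj 0 : (Fin 2 → ℝ) →L[ℝ] ℝ).comp (ContinuousLinearMap.snd ℝ ℝ (Fin 2 → ℝ)))) +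
        (Real.sin t • ((proj 1 : (Fin 2 → ℝ) →L[ℝ] ℝ).comp (ContinuousLinearMap.snd ℝ ℝ (Fin 2 → ℝ)))),
      (((-Real.cos t) * v 0 + (-Real.sin t) * v 1 + ((-Real.sin t) * w 0 + Real.cos t * w 1)) •
          ContinuousLinearMap.fst ℝ ℝ (Fin 2 → ℝ)) +
        ((-Real.sin t) • ((proj 0 : (Fin 2 → ℝ) →L[ℝ] ℝ).comp (ContinuousLinearMap.snd ℝ ℝ (Fin 2 → ℝ)))) +
        (Real.cos t • ((proj 1 : (Fin 2 → ℝ) →L[ℝ] ℝ).comp (ContinuousLinearMap.snd ℝ ℝ (Fin 2 → ℝ))))] with hD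
  have hg : HasFDerivAt (fun q : ℝ × (Fin 2 → ℝ) =>
      (fun i => (![Real.cos q.1 * q.2 0 + Real.sin q.1 * q.2 1 +
          (Real.sin q.1 * w 0 + (1 - Real.cos q.1) * w 1),
        (-Real.sin q.1) * q.2 0 + Real.cos q.1 * q.2 1 +
          ((Real.cos q.1 - 1) * w 0 + Real.sin q.1 * w 1)] : Fin 2 → ℝ) i))
      (ContinuousLinearMap.pi D) (t, v) := by
    have hc3a : HasDerivAt (fun u : ℝ => Real.sin u * w 0 + (1 - Real.cos u) * w 1)
        (Real.cos t * w 0 + Real.sin t * w 1) t := by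
      have := ((Real.hasDerivAt_sin t).mul_const (w 0)).add
        (((Real.hasDerivAt_cos t).const_sub 1).mul_const (w 1))
      exact this.congr_deriv (by ring)
    have hc1b : HasDerivAt (fun u : ℝ => -Real.sin u) (-Real.cos t) t :=
      (Real.hasDerivAt_sin t).neg
    have hc3b : HasDerivAt (fun u : ℝ => (Real.cos u - 1) * w 0 + Real.sin u * w 1)
        ((-Real.sin t) * w 0 + Real.cos t * w 1) t := by
      have := (((Real.hasDerivAt_cos t).sub_const 1).mul_const (w 0)).add
        ((Real.hasDerivAt_sin t).mul_const (w 1))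
      exact this
    apply hasFDerivAt_pi''
    intro i
    rw [ContinuousLinearMap.proj_pi]
    fin_cases i
    · simp only [hD, Matrix.cons_val_zero]
      exact aux _ _ _ _ _ _ (t, v) (Real.hasDerivAt_cos t) (Real.hasDerivAt_sin t) hc3a
    · simp only [hD, Matrix.cons_val_one, Matrix.head_cons]
      exact aux _ _ _ _ _ _ (t, v) hc1b (Real.hasDerivAt_cos t) hc3b
  have hΨ : HasFDerivAt psi
      ((ContinuousLinearMap.fst ℝ ℝ (Fin 2 → ℝ)).prod (ContinuousLinearMap.pi D)) (t, v) := by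
    rw [hpsiF]
    exact (hasFDerivAt_fst.prodMk hg)
  rw [hΨ.fderiv]
  constructor
  · rw [hX, hX₀, hpsi]
    refine Prod.ext (by simp) ?_
    funext i
    have hP := Real.sin_sq_add_cos_sq t
    fin_cases i
    · simp [hD, hA', hLam, hRotneg, Matrix.mulVec, dotProduct, Fin.sum_univ_two,
        hx0, hx1, ← hw, Function.comp, Matrix.vecHead, Matrix.vecTail]
      ring
    · simp [hD, hA', hLam, hRotneg, Matrix.mulVec, dotProduct, Fin.sum_univ_two,
        hx0, hx1, ← hw, Function.comp, Matrix.vecHead, Matrix.vecTail]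
      ring
  · rw [hY, hZ, hpsi]
    refine Prod.ext (by simp) ?_
    funext i
    have hP := Real.sin_sq_add_cos_sq t
    fin_cases i
    · simp [hD, hA', hLam, hRotneg, th, Matrix.mulVec, dotProduct, Fin.sum_univ_two,
        ← hw, Function.comp, Matrix.vecHead, Matrix.vecTail, Rot]
      linear_combination (eta1 0 + alpha * w 0) * hP
    · simp [hD, hA', hLam, hRotneg, th, Matrix.mulVec, dotProduct, Fin.sum_univ_two,
        ← hw, Function.comp, Matrix.vecHead, Matrix.vecTail, Rot]
      linear_combination (eta1 1 + alpha * w 1) * hP
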